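/- Let A, B, C, D : ℕ → ℕ be finitely supported nonincreasing sequences. Writing ⊕ for pointwise addition, one has merge(A ⊕ B, C ⊕ D) ≤ merge(A, C) ⊕ merge(B, D) in the lexicographic order. -/

import Mathlib

/-! The partial sums `∑ i < k` of a nonincreasing sequence are the sums of its `k` largest
entries, so the `k`-th partial sum of `merge X Y` is the largest value of
`∑ i < a, X i + ∑ j < c, Y j` over `a + c ≤ k`. For `merge (A + B) (C + D)` this maximum is
attained at some `(a, c)`, and the same pair `(a, c)` is admissible for both `merge A C` and
`merge B D`; hence every partial sum of the left side is at most that of the right side, and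
partial-sum dominance implies the lexicographic inequality. -/

/-- A sequence is finitely supported if it is eventually zero. -/
def FinSupported (A : ℕ → ℕ) : Prop :=
  ∃ N, ∀ n, N ≤ n → A n = 0

/-- The lexicographic order on sequences: `A ≤ B` iff `A = B` or at the smallest index
where they differ, the entry of `A` is smaller. -/
def LexLe (A B : ℕ → ℕ) : Prop :=
  A = B ∨ ∃ n, (∀ m, m < n → A m = B m) ∧ A n < B n

/-- The length of a finitely supported sequence: the least `N` such that `X n = 0`
for all `n ≥ N`. -/
noncomputable def len (X : ℕ → ℕ) : ℕ :=
  sInf {N | ∀ n, N ≤ n → X n = 0}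

/-- The multiset of nonzero values (with multiplicity) of a finitely supported sequence. -/
noncomputable def vals (A : ℕ → ℕ) : Multiset ℕ :=
  Multiset.filter (fun x => x ≠ 0) (((List.range (len A)).map A : List ℕ) : Multiset ℕ)

/-- Merge of two finitely supported sequences: the nonincreasing finitely supported
sequence whose multiset of nonzero values is the multiset sum of those of `A` and `B`
(concatenate and sort into nonincreasing order). -/
noncomputable def merge (A B : ℕ → ℕ) : ℕ → ℕ :=
  fun n => (((vals A + vals B).sort (· ≤ ·)).reverse).getD n 0

lemma lexLe_of_sum_range_le {E F : ℕ → ℕ}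
    (h : ∀ k, ∑ i ∈ Finset.range k, E i ≤ ∑ i ∈ Finset.range k, F i) : LexLe E F := by
  classical
  by_cases hEF : E = F
  · exact Or.inl hEF
  have hne : ∃ n, E n ≠ F n := by simpa [funext_iff] using hEF
  have hmin : ∀ m, m < Nat.find hne → E m = F m := fun m hm =>
    not_ne_iff.mp (Nat.find_min hne hm)
  refine Or.inr ⟨Nat.find hne, hmin, lt_of_le_of_ne ?_ (Nat.find_spec hne)⟩
  have hsum := h (Nat.find hne + 1)
  rw [Finset.sum_range_succ, Finset.sum_range_succ,
    Finset.sum_congr rfl fun m hm => hmin m (Finset.mem_range.mp hm)] at hsum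
  exact Nat.le_of_add_le_add_left hsum

lemma List.sum_range_getD {M : Type*} [AddCommMonoid M] (l : List M) (k : ℕ) :
    ∑ i ∈ Finset.range k, l.getD i 0 = (l.take k).sum := by
  induction k with
  | zero => simp
  | succ k ih =>
    rw [Finset.sum_range_succ, ih]
    rcases lt_or_ge k l.length with hk | hk
    · rw [List.sum_take_succ _ _ hk, List.getD_eq_getElem _ _ hk]
    · rw [List.take_of_length_le hk, List.take_of_length_le (by omega),
        List.getD_eq_default _ _ hk, add_zero]

lemma List.sum_map_range {M : Type*} [AddCommMonoid M] (X : ℕ → M) (n : ℕ) :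
    ((List.range n).map X).sum = ∑ i ∈ Finset.range n, X i := by
  simp [Finset.sum, Finset.range_val, Multiset.range]

lemma List.Sublist.sum_take_le {l₁ l₂ : List ℕ} (h : l₁.Sublist l₂)
    (hs : l₂.Pairwise (· ≥ ·)) (k : ℕ) : (l₁.take k).sum ≤ (l₂.take k).sum := by
  induction h generalizing k with
  | slnil => simp
  | @cons l₁ l₂ a _ ih =>
    rcases k with _ | k
    · simp
    have hle : ∀ x ∈ l₂, x ≤ a := fun x hx => List.rel_of_pairwise_cons hs hx
    have hlast : l₂.getD k 0 ≤ a := by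
      rcases lt_or_ge k l₂.length with hk | hk
      · rw [List.getD_eq_getElem _ _ hk]; exact hle _ (List.getElem_mem hk)
      · rw [List.getD_eq_default _ _ hk]; exact Nat.zero_le _
    calc (l₁.take (k + 1)).sum ≤ (l₂.take (k + 1)).sum := ih hs.of_cons (k + 1)
      _ = (l₂.take k).sum + l₂.getD k 0 := by
        rw [← List.sum_range_getD, ← List.sum_range_getD, Finset.sum_range_succ]
      _ ≤ a + (l₂.take k).sum := by omega
      _ = ((a :: l₂).take (k + 1)).sum := by rw [List.take_succ_cons, List.sum_cons]
  | cons_cons a _ ih =>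
    rcases k with _ | k
    · simp
    simpa only [List.take_succ_cons, List.sum_cons] using Nat.add_le_add_left (ih hs.of_cons k) a

noncomputable def sortDesc (M : Multiset ℕ) : List ℕ := (M.sort (· ≤ ·)).reverse

lemma coe_sortDesc (M : Multiset ℕ) : (sortDesc M : Multiset ℕ) = M := by
  rw [sortDesc, Multiset.coe_reverse, Multiset.sort_eq]

lemma pairwise_sortDesc (M : Multiset ℕ) : (sortDesc M).Pairwise (· ≥ ·) :=
  List.pairwise_reverse.mpr (Multiset.pairwise_sort M _)

lemma sortDesc_eq_of_pairwise {l : List ℕ} (hl : l.Pairwise (· ≥ ·)) : sortDesc l = l := by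
  rw [sortDesc, List.reverse_eq_iff]
  refine List.Perm.eq_of_pairwise' (Multiset.pairwise_sort _ _) (List.pairwise_reverse.mpr hl) ?_
  rw [← Multiset.coe_eq_coe, Multiset.sort_eq, Multiset.coe_reverse]

noncomputable def topSum (k : ℕ) (M : Multiset ℕ) : ℕ := ((sortDesc M).take k).sum

lemma sum_le_topSum {S M : Multiset ℕ} (h : S ≤ M) {k : ℕ} (hk : Multiset.card S ≤ k) :
    S.sum ≤ topSum k M := by
  have hsub : (sortDesc S).Sublist (sortDesc M) := by
    refine List.sublist_of_subperm_of_pairwise ?_ (pairwise_sortDesc S) (pairwise_sortDesc M)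
    rwa [← Multiset.coe_le, coe_sortDesc, coe_sortDesc]
  have htake : (sortDesc S).take k = sortDesc S := by
    rw [List.take_of_length_le]
    rwa [← Multiset.coe_card, coe_sortDesc]
  calc S.sum = ((sortDesc S).take k).sum := by rw [htake, ← Multiset.sum_coe, coe_sortDesc]
    _ ≤ topSum k M := hsub.sum_take_le (pairwise_sortDesc M) k

lemma exists_le_card_le_sum_eq_topSum (k : ℕ) (M : Multiset ℕ) :
    ∃ S ≤ M, Multiset.card S ≤ k ∧ S.sum = topSum k M := by
  refine ⟨(sortDesc M).take k, ?_, by simp, Multiset.sum_coe _⟩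
  conv_rhs => rw [← coe_sortDesc M]
  exact Multiset.coe_le.mpr (List.take_sublist _ _).subperm

lemma topSum_add_topSum_le {a c k : ℕ} (h : a + c ≤ k) (M N : Multiset ℕ) :
    topSum a M + topSum c N ≤ topSum k (M + N) := by
  obtain ⟨S, hSM, hS, hS_sum⟩ := exists_le_card_le_sum_eq_topSum a M
  obtain ⟨T, hTN, hT, hT_sum⟩ := exists_le_card_le_sum_eq_topSum c N
  rw [← hS_sum, ← hT_sum, ← Multiset.sum_add]
  exact sum_le_topSum (add_le_add hSM hTN) (by rw [Multiset.card_add]; omega)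

lemma exists_topSum_add_le (k : ℕ) (M N : Multiset ℕ) :
    ∃ a c, a + c ≤ k ∧ topSum k (M + N) ≤ topSum a M + topSum c N := by
  classical
  obtain ⟨S, hS, hcard, hS_sum⟩ := exists_le_card_le_sum_eq_topSum k (M + N)
  have hsplit : S = S ∩ M + (S - M) := by rw [add_comm, Multiset.sub_add_inter]
  refine ⟨Multiset.card (S ∩ M), Multiset.card (S - M), ?_, ?_⟩
  · rwa [← Multiset.card_add, ← hsplit]
  calc topSum k (M + N) = (S ∩ M).sum + (S - M).sum := by
        rw [← hS_sum, ← Multiset.sum_add, ← hsplit]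
    _ ≤ _ := add_le_add (sum_le_topSum Multiset.inter_le_right le_rfl)
      (sum_le_topSum (tsub_le_iff_left.mpr hS) le_rfl)

lemma sum_range_merge (A B : ℕ → ℕ) (k : ℕ) :
    ∑ i ∈ Finset.range k, merge A B i = topSum k (vals A + vals B) :=
  List.sum_range_getD _ k

section Vals

variable {X : ℕ → ℕ}

lemma FinSupported.add {Y : ℕ → ℕ} (hX : FinSupported X) (hY : FinSupported Y) :
    FinSupported (X + Y) := by
  obtain ⟨N, hN⟩ := hX
  obtain ⟨M, hM⟩ := hY
  exact ⟨max N M, fun n hn => by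
    simp [hN n (le_of_max_le_left hn), hM n (le_of_max_le_right hn)]⟩

lemma FinSupported.eq_zero_of_len_le (hX : FinSupported X) {n : ℕ} (hn : len X ≤ n) : X n = 0 :=
  Nat.sInf_mem hX n hn

lemma Antitone.ne_zero_of_lt_len (hX : Antitone X) {n : ℕ} (hn : n < len X) : X n ≠ 0 := by
  intro h0
  have : len X ≤ n := Nat.sInf_le fun m hm => Nat.le_zero.mp (h0 ▸ hX hm)
  omega

lemma sortDesc_vals (hX : Antitone X) : sortDesc (vals X) = (List.range (len X)).map X := by
  have hvals : vals X = (List.range (len X)).map X := by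
    refine Multiset.filter_eq_self.mpr fun x hx => ?_
    obtain ⟨i, hi, rfl⟩ := List.mem_map.mp (Multiset.mem_coe.mp hx)
    exact hX.ne_zero_of_lt_len (List.mem_range.mp hi)
  rw [hvals, sortDesc_eq_of_pairwise]
  exact List.pairwise_map.mpr (List.pairwise_lt_range.imp fun h => hX h.le)

lemma topSum_vals (hX : FinSupported X) (hX' : Antitone X) (k : ℕ) :
    topSum k (vals X) = ∑ i ∈ Finset.range k, X i := by
  rw [topSum, sortDesc_vals hX', ← List.map_take, List.take_range, List.sum_map_range]
  refine Finset.sum_subset (Finset.range_subset_range.mpr (min_le_left _ _)) fun i hi hni => ?_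
  simp only [Finset.mem_range] at hi hni
  exact hX.eq_zero_of_len_le (by omega)

end Vals

lemma sum_range_merge_add_le {A B C D : ℕ → ℕ}
    (hA : FinSupported A) (hB : FinSupported B) (hC : FinSupported C) (hD : FinSupported D)
    (hA' : Antitone A) (hB' : Antitone B) (hC' : Antitone C) (hD' : Antitone D) (k : ℕ) :
    ∑ i ∈ Finset.range k, merge (A + B) (C + D) i ≤
      ∑ i ∈ Finset.range k, (merge A C + merge B D) i := by
  obtain ⟨a, c, hac, hk⟩ := exists_topSum_add_le k (vals (A + B)) (vals (C + D))
  rw [topSum_vals (hA.add hB) (hA'.add hB'), topSum_vals (hC.add hD) (hC'.add hD')] at hk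
  simp only [Pi.add_apply, Finset.sum_add_distrib, sum_range_merge] at hk ⊢
  have hAC := topSum_add_topSum_le hac (vals A) (vals C)
  have hBD := topSum_add_topSum_le hac (vals B) (vals D)
  rw [topSum_vals hA hA', topSum_vals hC hC'] at hAC
  rw [topSum_vals hB hB', topSum_vals hD hD'] at hBD
  omega

/-- the interchange inequality between merging (horizontal stacking) and
pointwise addition (vertical stacking) of Young diagrams:
`merge (A ⊕ B) (C ⊕ D) ≤ merge A C ⊕ merge B D` lexicographically. -/
theorem merge_add_interchange (A B C D : ℕ → ℕ)
    (hA : FinSupported A) (hB : FinSupported B) (hC : FinSupported C) (hD : FinSupported D)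
    (hA' : Antitone A) (hB' : Antitone B) (hC' : Antitone C) (hD' : Antitone D) :
    LexLe (merge (A + B) (C + D)) (merge A C + merge B D) :=
  lexLe_of_sum_range_le (sum_range_merge_add_le hA hB hC hD hA' hB' hC' hD')
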